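/- For every n̄ > 0 and η ∈ (1/2, 1], the second derivative with respect to η of L(η, n̄) = g(η n̄) − g((1−η) n̄) equals n̄²·(1/((1+(1−η)n̄)(1−η)n̄) − 1/((1+η n̄)η n̄)), and this quantity is nonnegative. -/

import Mathlib

noncomputable def g (x : ℝ) : ℝ := (1 + x) * Real.log (1 + x) - x * Real.log x

/-!
For `x > 0`, `g' x = log (1 + x) - log x` and `g'' x = -1 / ((1 + x) x)`, so the chain rule gives
`L'' η = n̄² (g'' (η n̄) - g'' ((1 - η) n̄))`. It is nonnegative because `x ↦ (1 + x) x` is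
increasing on `(0, ∞)` and `(1 - η) n̄ ≤ η n̄` for `η ≥ 1/2`.
-/

open Filter Topology Real

section Calculus

variable {𝕜 F : Type*} [NontriviallyNormedField 𝕜] [NormedAddCommGroup F] [NormedSpace 𝕜 F]

theorem iteratedDeriv_two_eq_of_hasDerivAt {f f' : 𝕜 → F} {f'' : F} {x : 𝕜}
    (hf : ∀ᶠ y in 𝓝 x, HasDerivAt f (f' y) y) (hf' : HasDerivAt f' f'' x) :
    iteratedDeriv 2 f x = f'' := by
  rw [iteratedDeriv_succ, iteratedDeriv_one]
  exact (hf'.congr_of_eventuallyEq (hf.mono fun y hy => hy.deriv)).deriv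

theorem HasDerivAt.comp_mul_const {φ : 𝕜 → F} {φ' : F} {c t : 𝕜}
    (hφ : HasDerivAt φ φ' (t * c)) : HasDerivAt (fun s => φ (s * c)) (c • φ') t :=
  hφ.scomp t (hasDerivAt_mul_const c)

theorem HasDerivAt.comp_one_sub_mul_const {φ : 𝕜 → F} {φ' : F} {c t : 𝕜}
    (hφ : HasDerivAt φ φ' ((1 - t) * c)) :
    HasDerivAt (fun s => φ ((1 - s) * c)) (-(c • φ')) t := by
  have h := hφ.scomp t (((hasDerivAt_id t).const_sub 1).mul_const c)
  exact h.congr_deriv (by simp)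

end Calculus

theorem hasDerivAt_g {x : ℝ} (hx : 0 < x) : HasDerivAt g (log (1 + x) - log x) x := by
  have h := ((hasDerivAt_mul_log (by positivity : 1 + x ≠ 0)).comp x
    ((hasDerivAt_id x).const_add 1)).sub (hasDerivAt_mul_log hx.ne')
  exact h.congr_deriv (by ring)

theorem hasDerivAt_log_one_add_sub_log {x : ℝ} (hx : 0 < x) :
    HasDerivAt (fun y => log (1 + y) - log y) (-(1 / ((1 + x) * x))) x := by
  have h := ((hasDerivAt_log (by positivity : 1 + x ≠ 0)).comp x
    ((hasDerivAt_id x).const_add 1)).sub (hasDerivAt_log hx.ne')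
  exact h.congr_deriv (by field_simp; ring)

theorem one_div_one_add_mul_self_le_of_le {a b : ℝ} (ha : 0 < a) (hab : a ≤ b) :
    1 / ((1 + b) * b) ≤ 1 / ((1 + a) * a) :=
  one_div_le_one_div_of_le (by positivity) (by gcongr; linarith)

theorem L_second_deriv (nbar : ℝ) (hn : 0 < nbar) (η : ℝ) (hη : η ∈ Set.Ioo (1 / 2 : ℝ) 1) :
    iteratedDeriv 2 (fun η : ℝ => g (η * nbar) - g ((1 - η) * nbar)) η =
      nbar ^ 2 * (1 / ((1 + (1 - η) * nbar) * ((1 - η) * nbar))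
        - 1 / ((1 + η * nbar) * (η * nbar))) ∧
    0 ≤ nbar ^ 2 * (1 / ((1 + (1 - η) * nbar) * ((1 - η) * nbar))
        - 1 / ((1 + η * nbar) * (η * nbar))) := by
  obtain ⟨hη_half, hη_one⟩ := hη
  have hpos {t : ℝ} (ht : t ∈ Set.Ioo (0 : ℝ) 1) : 0 < t * nbar ∧ 0 < (1 - t) * nbar :=
    ⟨mul_pos ht.1 hn, mul_pos (sub_pos.2 ht.2) hn⟩
  have hη : η ∈ Set.Ioo (0 : ℝ) 1 := ⟨by linarith, hη_one⟩
  have hL' : ∀ᶠ t in 𝓝 η, HasDerivAt (fun η : ℝ => g (η * nbar) - g ((1 - η) * nbar))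
      (nbar * (log (1 + t * nbar) - log (t * nbar))
        + nbar * (log (1 + (1 - t) * nbar) - log ((1 - t) * nbar))) t := by
    filter_upwards [isOpen_Ioo.mem_nhds hη] with t ht
    exact ((hasDerivAt_g (hpos ht).1).comp_mul_const.sub
      (hasDerivAt_g (hpos ht).2).comp_one_sub_mul_const).congr_deriv
      (by simp only [smul_eq_mul]; ring)
  have hL'' := ((hasDerivAt_log_one_add_sub_log (hpos hη).1).comp_mul_const.const_mul nbar).add
    ((hasDerivAt_log_one_add_sub_log (hpos hη).2).comp_one_sub_mul_const.const_mul nbar)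
  refine ⟨iteratedDeriv_two_eq_of_hasDerivAt hL'
    (hL''.congr_deriv (by simp only [smul_eq_mul]; ring)), ?_⟩
  exact mul_nonneg (sq_nonneg nbar) (sub_nonneg.2 (one_div_one_add_mul_self_le_of_le (hpos hη).2
    (by nlinarith)))
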